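/- arXiv:0711.2104 — 3 statements merged into one kernel-verified Lean document; each statement's English description precedes it below -/
import Mathlib

section
/- Let W be a Bernoulli random walk with parameter p_W, 0 ≤ p_W ≤ 1/2. Then the first-passage probabilities converge: lim_{t→∞} P(W_t ≠ W_s for all 0 ≤ s < t) = 1 − 2·p_W. -/
/-!
Rotating the first `t` increments cyclically does not change their joint law, so
`t · P(W_t is a new site)` is the expected number of cyclic rotations of `(N_0, …, N_{t-1})`
whose walk ends at a new site. By the cycle lemma this number is `|W_t|` for every path: for
`W_t > 0`, rotation `r` is good exactly when `r + t` is a strict record time of the periodically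
continued walk, and the running maximum gains `W_t` over one period, one unit per record.
Hence `t · P(R̄^t) = E|W_t|`, and since `E W_t = t (2p - 1) ≤ 0` and `Var W_t ≤ t`,
`|E|W_t| - t (1 - 2p)| ≤ √t`.
-/

open MeasureTheory ProbabilityTheory Filter Finset

/-- The first-passage event `R̄^t` for the walk with increments `u`. -/
def IsNewSite (u : ℕ → ℤ) (t : ℕ) : Prop :=
  ∀ s < t, ∑ j ∈ Ico s t, u j ≠ 0

instance (u : ℕ → ℤ) (t : ℕ) : Decidable (IsNewSite u t) :=
  inferInstanceAs (Decidable (∀ s < t, _))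

theorem isNewSite_congr {u v : ℕ → ℤ} {t : ℕ} (h : ∀ j < t, u j = v j) :
    IsNewSite u t ↔ IsNewSite v t :=
  forall₂_congr fun _ _ => by rw [sum_congr rfl fun j hj => h j (mem_Ico.1 hj).2]

theorem exists_eq_of_le_of_le_of_succ_le {G : ℕ → ℤ} (hG : ∀ k, G (k + 1) ≤ G k + 1)
    {a b : ℕ} (hab : a ≤ b) {c : ℤ} (ha : G a ≤ c) (hb : c ≤ G b) :
    ∃ k ∈ Icc a b, G k = c := by
  induction b, hab using Nat.le_induction with
  | base => exact ⟨a, left_mem_Icc.2 le_rfl, le_antisymm ha hb⟩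
  | succ b hab ih =>
    by_cases hcb : c ≤ G b
    · obtain ⟨k, hk, hGk⟩ := ih hcb
      exact ⟨k, Icc_subset_Icc_right b.le_succ hk, hGk⟩
    · exact ⟨b + 1, mem_Icc.2 ⟨by omega, le_rfl⟩, by linarith [hG b]⟩

theorem partialSups_add_one_eq_add_ite {G : ℕ → ℤ} (hG : ∀ k, G (k + 1) ≤ G k + 1) (n : ℕ) :
    partialSups G (n + 1) = partialSups G n + if partialSups G n < G (n + 1) then 1 else 0 := by
  rw [← Order.succ_eq_add_one, partialSups_succ, Order.succ_eq_add_one]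
  have hstep := hG n
  have hle : G n ≤ partialSups G n := le_partialSups_of_le G le_rfl
  split_ifs with h
  · rw [sup_eq_right.2 h.le]; omega
  · rw [sup_eq_left.2 (not_lt.1 h), add_zero]

section CycleLemma

variable {G : ℕ → ℤ}

theorem forall_ne_iff_partialSups_lt {m : ℕ} (hG : ∀ k, G (k + 1) ≤ G k + 1)
    (hper : ∀ k, G (k + (m + 1)) = G k + (G (m + 1) - G 0)) (hlt : G 0 < G (m + 1))
    {r : ℕ} (hr : r < m + 1) :
    (∀ s < m + 1, G (r + s) ≠ G (r + (m + 1))) ↔ partialSups G (m + r) < G (m + r + 1) := by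
  rw [show m + r + 1 = r + (m + 1) by omega]
  constructor
  · intro hne
    -- a value above `G (r + (m + 1)) > G r` would force `G` to cross that level in between
    have hbelow : ∀ s < m + 1, G (r + s) < G (r + (m + 1)) := by
      intro s hs
      by_contra! hge
      obtain ⟨k, hk, hGk⟩ := exists_eq_of_le_of_le_of_succ_le hG (Nat.le_add_right r s)
        (by rw [hper]; linarith) hge
      rw [mem_Icc] at hk
      exact hne (k - r) (by omega) (by rwa [Nat.add_sub_cancel' hk.1])
    rw [partialSups_iff_forall (· < G (r + (m + 1))) sup_lt_iff]
    intro j hj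
    rcases le_or_gt r j with hrj | hjr
    · simpa [Nat.add_sub_cancel' hrj] using hbelow (j - r) (by omega)
    · have := hbelow (j + (m + 1) - r) (by omega)
      rw [show r + (j + (m + 1) - r) = j + (m + 1) by omega, hper] at this
      linarith
  · intro hR s hs
    exact ((le_partialSups_of_le G (show r + s ≤ m + r by omega)).trans_lt hR).ne

theorem partialSups_add_period {m : ℕ} (hper : ∀ k, G (k + (m + 1)) = G k + (G (m + 1) - G 0))
    (hle : G 0 ≤ G (m + 1)) :
    partialSups G (m + (m + 1)) = partialSups G m + (G (m + 1) - G 0) := by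
  apply le_antisymm
  · refine partialSups_le _ _ _ fun j hj => ?_
    rcases le_or_gt j m with hjm | hmj
    · linarith [le_partialSups_of_le G hjm]
    · have := le_partialSups_of_le G (show j - (m + 1) ≤ m by omega)
      rw [← Nat.sub_add_cancel (show m + 1 ≤ j by omega), hper]
      linarith
  · have : partialSups G m ≤ partialSups G (m + (m + 1)) - (G (m + 1) - G 0) :=
      partialSups_le _ _ _ fun j hj => by
        linarith [hper j, le_partialSups_of_le G (show j + (m + 1) ≤ m + (m + 1) by omega)]
    linarith

theorem card_filter_forall_ne_eq_of_lt {t : ℕ} (hG : ∀ k, G (k + 1) ≤ G k + 1)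
    (hper : ∀ k, G (k + t) = G k + (G t - G 0)) (hlt : G 0 < G t) :
    (#{r ∈ range t | ∀ s < t, G (r + s) ≠ G (r + t)} : ℤ) = G t - G 0 := by
  obtain ⟨m, rfl⟩ : ∃ m, t = m + 1 :=
    Nat.exists_eq_add_one_of_ne_zero fun ht => by subst ht; exact hlt.ne rfl
  let R := partialSups G
  calc (#{r ∈ range (m + 1) | ∀ s < m + 1, G (r + s) ≠ G (r + (m + 1))} : ℤ)
      = ∑ r ∈ range (m + 1), if R (m + r) < G (m + r + 1) then 1 else 0 := by
        rw [natCast_card_filter]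
        exact sum_congr rfl fun r hr =>
          if_congr (forall_ne_iff_partialSups_lt hG hper hlt (mem_range.1 hr)) rfl rfl
    _ = ∑ r ∈ range (m + 1), (R (m + (r + 1)) - R (m + r)) :=
        sum_congr rfl fun r _ => by rw [← add_assoc, partialSups_add_one_eq_add_ite hG]; ring
    _ = G (m + 1) - G 0 := by
        rw [sum_range_sub (fun r => R (m + r)), add_zero, partialSups_add_period hper hlt.le]
        ring

theorem card_filter_forall_ne_eq_abs {t : ℕ} (hG : ∀ k, |G (k + 1) - G k| ≤ 1)
    (hper : ∀ k, G (k + t) = G k + (G t - G 0)) :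
    (#{r ∈ range t | ∀ s < t, G (r + s) ≠ G (r + t)} : ℤ) = |G t - G 0| := by
  rcases lt_trichotomy (G 0) (G t) with h | h | h
  · rw [abs_of_pos (sub_pos.2 h)]
    exact card_filter_forall_ne_eq_of_lt (fun k => by linarith [(abs_le.1 (hG k)).2]) hper h
  · rw [h, sub_self, abs_zero, Nat.cast_eq_zero, card_eq_zero, filter_eq_empty_iff]
    intro r hr hne
    exact hne 0 (by simp at hr; omega) (by rw [add_zero, hper, h, sub_self, add_zero])
  · have := card_filter_forall_ne_eq_of_lt (G := fun k => -G k)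
      (fun k => by linarith [(abs_le.1 (hG k)).1]) (fun k => by rw [hper]; ring) (neg_lt_neg h)
    simp only [ne_eq, neg_inj] at this
    rw [this, abs_of_neg (sub_neg.2 h)]
    ring

end CycleLemma

theorem cycle_lemma {u : ℕ → ℤ} {t : ℕ} (hu : ∀ j, |u j| ≤ 1) (hper : ∀ j, u (j + t) = u j) :
    (#{r ∈ range t | IsNewSite (fun j => u (r + j)) t} : ℤ) = |∑ j ∈ range t, u j| := by
  set G : ℕ → ℤ := fun k => ∑ j ∈ range k, u j
  have hrotate : ∀ r, IsNewSite (fun j => u (r + j)) t ↔ ∀ s < t, G (r + s) ≠ G (r + t) := by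
    refine fun r => forall₂_congr fun s hs => ?_
    rw [sum_Ico_add u, sum_Ico_eq_sub u (by omega), sub_ne_zero, ne_comm, add_comm s, add_comm t]
  have hG : ∀ k, |G (k + 1) - G k| ≤ 1 := fun k => by simpa [G, sum_range_succ] using hu k
  have hGper : ∀ k, G (k + t) = G k + (G t - G 0) := fun k => by
    simp only [G, add_comm k t, sum_range_add, sum_range_zero, sub_zero]
    rw [add_comm]
    congr 1
    exact sum_congr rfl fun j _ => by rw [add_comm, hper]
  rw [filter_congr fun r _ => hrotate r, card_filter_forall_ne_eq_abs hG hGper]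
  simp [G]

section Probability

variable {Ω : Type*} [MeasurableSpace Ω] {μ : Measure Ω}

theorem map_comp_eq_map_comp_of_iIndepFun {ι κ β : Type*} [Fintype κ] [MeasurableSpace β]
    {X : ι → Ω → β} (hX : ∀ i, Measurable (X i)) (hind : iIndepFun X μ)
    (hident : ∀ i j, μ.map (X i) = μ.map (X j)) {g₁ g₂ : κ → ι}
    (hg₁ : g₁.Injective) (hg₂ : g₂.Injective) :
    μ.map (fun ω k => X (g₁ k) ω) = μ.map (fun ω k => X (g₂ k) ω) := by
  rw [(hind.precomp hg₁).map_fun_eq_pi_map fun k => (hX _).aemeasurable,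
    (hind.precomp hg₂).map_fun_eq_pi_map fun k => (hX _).aemeasurable]
  exact congrArg Measure.pi (funext fun k => hident _ _)

variable [IsProbabilityMeasure μ]

theorem map_eq_map_of_measureReal_eq_one {X Y : Ω → ℤ} (hX : Measurable X) (hY : Measurable Y)
    (hXval : ∀ ω, X ω = 1 ∨ X ω = -1) (hYval : ∀ ω, Y ω = 1 ∨ Y ω = -1)
    (h : μ.real {ω | X ω = 1} = μ.real {ω | Y ω = 1}) : μ.map X = μ.map Y := by
  have hpre : ∀ Z : Ω → ℤ, (∀ ω, Z ω = 1 ∨ Z ω = -1) → ∀ z, Z ⁻¹' {z} =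
      if z = 1 then {ω | Z ω = 1} else if z = -1 then {ω | Z ω = 1}ᶜ else ∅ := by
    intro Z hZ z
    ext ω
    rcases hZ ω with h | h <;> split_ifs <;> simp [h] <;> omega
  have h' : μ {ω | X ω = 1} = μ {ω | Y ω = 1} :=
    (ENNReal.toReal_eq_toReal_iff' (measure_ne_top _ _) (measure_ne_top _ _)).1 h
  have hXs : MeasurableSet {ω | X ω = 1} := hX (measurableSet_singleton 1)
  have hYs : MeasurableSet {ω | Y ω = 1} := hY (measurableSet_singleton 1)
  refine Measure.ext_iff_singleton.2 fun z => ?_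
  rw [Measure.map_apply hX (measurableSet_singleton z),
    Measure.map_apply hY (measurableSet_singleton z),
    hpre X hXval, hpre Y hYval]
  split_ifs
  · exact h'
  · rw [prob_compl_eq_one_sub hXs, prob_compl_eq_one_sub hYs, h']
  · rfl

theorem integral_eq_two_mul_measureReal_sub_one {X : Ω → ℤ} (hX : Measurable X)
    (hXval : ∀ ω, X ω = 1 ∨ X ω = -1) :
    ∫ ω, (X ω : ℝ) ∂μ = 2 * μ.real {ω | X ω = 1} - 1 := by
  have hs : MeasurableSet {ω | X ω = 1} := hX (measurableSet_singleton 1)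
  have hindicator : (fun ω => (X ω : ℝ)) = fun ω => 2 * {ω | X ω = 1}.indicator 1 ω - 1 := by
    ext ω
    rcases hXval ω with h | h <;> norm_num [h]
  rw [hindicator,
    integral_sub (((integrable_const 1).indicator hs).const_mul 2) (integrable_const 1),
    integral_const_mul, integral_indicator_one hs]
  simp

theorem abs_integral_abs_sub_abs_integral_le_sqrt_variance {Y : Ω → ℝ} (hY : MemLp Y 2 μ) :
    |(∫ ω, |Y ω| ∂μ - |∫ ω, Y ω ∂μ|)| ≤ √(Var[Y; μ]) := by
  set m := ∫ ω, Y ω ∂μ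
  have hZ : MemLp (fun ω => |Y ω - m|) 2 μ := (hY.sub (memLp_const m)).abs
  have hjensen : (∫ ω, |Y ω - m| ∂μ) ^ 2 ≤ Var[Y; μ] := by
    have := variance_nonneg (fun ω => |Y ω - m|) μ
    rw [variance_eq_sub hZ] at this
    rw [variance_eq_integral hY.aemeasurable]
    simpa [sq_abs] using this
  calc |(∫ ω, |Y ω| ∂μ - |m|)|
      = |∫ ω, (|Y ω| - |m|) ∂μ| := by
        rw [integral_sub (hY.integrable one_le_two).abs (integrable_const _)]
        simp
    _ ≤ ∫ ω, |(|Y ω| - |m|)| ∂μ := abs_integral_le_integral_abs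
    _ ≤ ∫ ω, |Y ω - m| ∂μ :=
        integral_mono ((hY.integrable one_le_two).abs.sub (integrable_const _)).abs
          (hZ.integrable one_le_two) fun ω => abs_abs_sub_abs_le_abs_sub _ _
    _ ≤ √(Var[Y; μ]) := Real.le_sqrt_of_sq_le hjensen

theorem variance_sum_le_card {ι : Type*} {X : ι → Ω → ℝ} (hX : ∀ i, Measurable (X i))
    (hind : iIndepFun X μ) (hbound : ∀ i ω, |X i ω| ≤ 1) (s : Finset ι) :
    Var[fun ω => ∑ i ∈ s, X i ω; μ] ≤ #s := by
  have hmem : ∀ i, MemLp (X i) 2 μ := fun i =>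
    MemLp.of_bound (hX i).aestronglyMeasurable 1 (ae_of_all _ (hbound i))
  rw [← Finset.sum_fn, IndepFun.variance_sum (fun i _ => hmem i)
    fun i _ j _ hij => hind.indepFun hij, card_eq_sum_ones, Nat.cast_sum]
  refine sum_le_sum fun i _ => ?_
  have := variance_le_sq_of_bounded (μ := μ) (a := -1) (b := 1)
    (ae_of_all _ fun ω => abs_le.1 (hbound i ω)) (hX i).aemeasurable
  norm_num at this
  exact_mod_cast this

end Probability

section BernoulliWalk

variable {Ω : Type*} [MeasurableSpace Ω] {μ : Measure Ω} [IsProbabilityMeasure μ]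
  {N : ℕ → Ω → ℤ}

theorem integral_abs_sum_eq_mul_measureReal_isNewSite (hmeas : ∀ i, Measurable (N i))
    (hind : iIndepFun N μ) (hident : ∀ i j, μ.map (N i) = μ.map (N j))
    (hbound : ∀ i ω, |N i ω| ≤ 1) (t : ℕ) :
    ∫ ω, |∑ i ∈ range t, (N i ω : ℝ)| ∂μ = t * μ.real {ω | IsNewSite (N · ω) t} := by
  set A : ℕ → Set Ω := fun r => {ω | IsNewSite (fun j => N ((r + j) % t) ω) t}
  set B : Set (Fin t → ℤ) := {v | IsNewSite (fun j => if h : j < t then v ⟨j, h⟩ else 0) t}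
  have hB : MeasurableSet B := (Set.to_countable B).measurableSet
  have hA : ∀ r, A r = (fun ω (k : Fin t) => N ((r + k) % t) ω) ⁻¹' B := fun r =>
    Set.ext fun ω => isNewSite_congr fun j hj => by simp [hj]
  have hE : {ω | IsNewSite (N · ω) t} = (fun ω (k : Fin t) => N k ω) ⁻¹' B :=
    Set.ext fun ω => isNewSite_congr fun j hj => by simp [hj]
  have hAmeas : ∀ r, MeasurableSet (A r) := fun r => by
    rw [hA]; exact measurable_pi_lambda _ (fun k => hmeas _) hB
  have hAE : ∀ r, μ.real (A r) = μ.real {ω | IsNewSite (N · ω) t} := by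
    intro r
    have hinj : (fun k : Fin t => (r + k) % t).Injective := fun a b hab =>
      Fin.ext (Nat.ModEq.eq_of_lt_of_lt (Nat.ModEq.add_left_cancel' r hab) a.2 b.2)
    rw [hA, hE, measureReal_def, measureReal_def,
      ← Measure.map_apply (measurable_pi_lambda _ fun k => hmeas _) hB,
      ← Measure.map_apply (measurable_pi_lambda _ fun k => hmeas _) hB,
      map_comp_eq_map_comp_of_iIndepFun hmeas hind hident hinj Fin.val_injective]
  have hcount : ∀ ω, ∑ r ∈ range t, (A r).indicator 1 ω = |∑ i ∈ range t, (N i ω : ℝ)| := by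
    intro ω
    have := cycle_lemma (u := fun j => N (j % t) ω) (fun j => hbound _ ω)
      (fun j => by rw [Nat.add_mod_right])
    rw [sum_congr rfl fun j hj => by rw [Nat.mod_eq_of_lt (mem_range.1 hj)]] at this
    simp only [Set.indicator_apply, Pi.one_apply, sum_boole]
    exact_mod_cast this
  calc ∫ ω, |∑ i ∈ range t, (N i ω : ℝ)| ∂μ
      = ∫ ω, ∑ r ∈ range t, (A r).indicator 1 ω ∂μ :=
        integral_congr_ae (ae_of_all _ fun ω => (hcount ω).symm)
    _ = ∑ r ∈ range t, μ.real (A r) := by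
        rw [integral_finsetSum _ fun r _ => (integrable_const 1).indicator (hAmeas r)]
        exact sum_congr rfl fun r _ => integral_indicator_one (hAmeas r)
    _ = t * μ.real {ω | IsNewSite (N · ω) t} := by simp [hAE]

theorem abs_measureReal_isNewSite_sub_le {p : ℝ} (hp : p ≤ 1 / 2)
    (hmeas : ∀ i, Measurable (N i)) (hind : iIndepFun N μ) (hval : ∀ i ω, N i ω = 1 ∨ N i ω = -1)
    (hdist : ∀ i, μ.real {ω | N i ω = 1} = p) {t : ℕ} (ht : 0 < t) :
    |μ.real {ω | IsNewSite (N · ω) t} - (1 - 2 * p)| ≤ 1 / √t := by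
  have hbound : ∀ i ω, |N i ω| ≤ 1 := fun i ω => by rcases hval i ω with h | h <;> simp [h]
  have hmeasR : ∀ i, Measurable fun ω => (N i ω : ℝ) := fun i =>
    measurable_from_top.comp (hmeas i)
  have hident : ∀ i j, μ.map (N i) = μ.map (N j) := fun i j =>
    map_eq_map_of_measureReal_eq_one (hmeas i) (hmeas j) (hval i) (hval j)
      ((hdist i).trans (hdist j).symm)
  have hboundR : ∀ i ω, |(N i ω : ℝ)| ≤ 1 := fun i ω => by exact_mod_cast hbound i ω
  have hmemN : ∀ i, MemLp (fun ω => (N i ω : ℝ)) 2 μ := fun i =>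
    MemLp.of_bound (hmeasR i).aestronglyMeasurable 1 (ae_of_all _ (hboundR i))
  have hmean : ∫ ω, ∑ i ∈ range t, (N i ω : ℝ) ∂μ = t * (2 * p - 1) := by
    rw [integral_finsetSum _ fun i _ => (hmemN i).integrable one_le_two]
    simp only [integral_eq_two_mul_measureReal_sub_one (hmeas _) (hval _), hdist, sum_const,
      card_range, nsmul_eq_mul]
  have hvar : Var[fun ω => ∑ i ∈ range t, (N i ω : ℝ); μ] ≤ t := by
    simpa using variance_sum_le_card hmeasR
      (hind.comp (fun _ z => (z : ℝ)) fun _ => measurable_from_top) hboundR (range t)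
  have hmem : MemLp (fun ω => ∑ i ∈ range t, (N i ω : ℝ)) 2 μ :=
    memLp_finsetSum _ fun i _ => hmemN i
  have key := abs_integral_abs_sub_abs_integral_le_sqrt_variance hmem
  rw [integral_abs_sum_eq_mul_measureReal_isNewSite hmeas hind hident hbound, hmean, abs_mul,
    Nat.abs_cast, abs_of_nonpos (by linarith : 2 * p - 1 ≤ 0)] at key
  have htR : (0 : ℝ) < t := by exact_mod_cast ht
  rw [← Real.sqrt_div_self', le_div_iff₀ htR]
  calc |μ.real {ω | IsNewSite (N · ω) t} - (1 - 2 * p)| * t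
      = |(t * μ.real {ω | IsNewSite (N · ω) t} - t * -(2 * p - 1))| := by
        rw [show t * μ.real {ω | IsNewSite (N · ω) t} - t * -(2 * p - 1)
          = (μ.real {ω | IsNewSite (N · ω) t} - (1 - 2 * p)) * t by ring, abs_mul, abs_of_pos htR]
    _ ≤ √(Var[fun ω => ∑ i ∈ range t, (N i ω : ℝ); μ]) := key
    _ ≤ √t := Real.sqrt_le_sqrt hvar

end BernoulliWalk

theorem first_passage_limit_general
    {Ω : Type*} [MeasurableSpace Ω] (μ : Measure Ω) [IsProbabilityMeasure μ]
    (p : ℝ) (hp : p ≤ 1 / 2)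
    (N : ℕ → Ω → ℤ)
    (hNmeas : ∀ i, Measurable (N i))
    (hNindep : iIndepFun N μ)
    (hNval : ∀ i ω, N i ω = 1 ∨ N i ω = -1)
    (hNdist : ∀ i, (μ {ω | N i ω = 1}).toReal = p)
    (W : ℕ → Ω → ℤ)
    (hW : ∀ t ω, W t ω = ∑ i ∈ Finset.range t, N i ω) :
    Tendsto (fun t : ℕ => (μ {ω | ∀ s < t, W t ω ≠ W s ω}).toReal)
      atTop (nhds (1 - 2 * p)) := by
  have hevent : ∀ t, {ω | ∀ s < t, W t ω ≠ W s ω} = {ω | IsNewSite (N · ω) t} := fun t =>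
    Set.ext fun ω => forall₂_congr fun s hs => by rw [hW, hW, sum_Ico_eq_sub _ hs.le, sub_ne_zero]
  have hlim : Tendsto (fun t : ℕ => 1 / √(t : ℝ)) atTop (nhds 0) := by
    simpa only [one_div, Function.comp_def] using
      tendsto_inv_atTop_zero.comp (Real.tendsto_sqrt_atTop.comp tendsto_natCast_atTop_atTop)
  rw [tendsto_iff_norm_sub_tendsto_zero]
  refine squeeze_zero_norm' ((eventually_gt_atTop 0).mono fun t ht => ?_) hlim
  rw [norm_norm, Real.norm_eq_abs, hevent, ← measureReal_def]
  exact abs_measureReal_isNewSite_sub_le hp hNmeas hNindep hNval hNdist ht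

/-- For a Bernoulli random walk with parameter `p`, `0 ≤ p ≤ 1/2`,
the first-passage probabilities converge:
`lim_{t→∞} P(W_t ≠ W_s for all 0 ≤ s < t) = 1 − 2 p`. -/
theorem first_passage_limit
    {Ω : Type*} [MeasurableSpace Ω] (μ : Measure Ω) [IsProbabilityMeasure μ]
    (p : ℝ) (hp0 : 0 ≤ p) (hp : p ≤ 1 / 2)
    (N : ℕ → Ω → ℤ)
    (hNmeas : ∀ i, Measurable (N i))
    (hNindep : iIndepFun N μ)
    (hNval : ∀ i ω, N i ω = 1 ∨ N i ω = -1)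
    (hNdist : ∀ i, (μ {ω | N i ω = 1}).toReal = p)
    (W : ℕ → Ω → ℤ)
    (hW : ∀ t ω, W t ω = ∑ i ∈ Finset.range t, N i ω) :
    Tendsto (fun t : ℕ => (μ {ω | ∀ s < t, W t ω ≠ W s ω}).toReal)
      atTop (nhds (1 - 2 * p)) :=
  first_passage_limit_general μ p hp N hNmeas hNindep hNval hNdist W hW
end

section
/- (Gray's conditional rate-distortion lemma.) Let V take values in a finite set 𝒱, W in a finite set 𝒲, with a given joint law, let 𝒱̂ be a finite reproduction set and d : 𝒱 × 𝒱̂ → [0,∞) a distortion measure, and let D ≥ 0 be such that some joint law of (V, W, V̂) extending the law of (V, W) satisfies E[d(V, V̂)] ≤ D. Then R_{V|W}(D) ≤ R_V(D) ≤ R_{V|W}(D) + I(V; W). -/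
open MeasureTheory ProbabilityTheory Filter

/-- `plog p = −p·log₂ p` (with the convention `plog 0 = 0`). -/
noncomputable def plog (p : ℝ) : ℝ := -(p * Real.logb 2 p)

/-- Shannon entropy (base 2) of a random variable `X` under the measure `μ`:
`H(X) = −Σ_s P(X = s) log₂ P(X = s)`. -/
noncomputable def shEnt {Ω : Type*} [MeasurableSpace Ω] (μ : Measure Ω)
    {S : Type*} (X : Ω → S) : ℝ :=
  ∑' s : S, plog (μ (X ⁻¹' {s})).toReal

/-- Conditional Shannon entropy (base 2): `H(X | Y) = H(X, Y) − H(Y)`. -/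
noncomputable def shCondEnt {Ω : Type*} [MeasurableSpace Ω] (μ : Measure Ω)
    {S T : Type*} (X : Ω → S) (Y : Ω → T) : ℝ :=
  shEnt μ (fun ω => (X ω, Y ω)) - shEnt μ Y

/-- The binary entropy function `H_b(p) = −p log₂ p − (1−p) log₂ (1−p)`. -/
noncomputable def binEnt (p : ℝ) : ℝ := plog p + plog (1 - p)
/-- Mutual information (base 2): `I(X;Y) = H(X) + H(Y) − H(X,Y)`. -/
noncomputable def mutInf {Ω : Type*} [MeasurableSpace Ω] (μ : Measure Ω)
    {S T : Type*} (X : Ω → S) (Y : Ω → T) : ℝ :=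
  shEnt μ X + shEnt μ Y - shEnt μ (fun ω => (X ω, Y ω))

/-- Conditional mutual information (base 2):
`I(X;Y|Z) = H(X|Z) + H(Y|Z) − H(X,Y|Z)`. -/
noncomputable def condMutInf {Ω : Type*} [MeasurableSpace Ω] (μ : Measure Ω)
    {S T U : Type*} (X : Ω → S) (Y : Ω → T) (Z : Ω → U) : ℝ :=
  shCondEnt μ X Z + shCondEnt μ Y Z - shCondEnt μ (fun ω => (X ω, Y ω)) Z

/-!
Conditional and unconditional rates are compared through the chain rule
`I(V; W) + I(V; V̂ | W) = I(V; V̂) + I(V; W | V̂)`.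
A test channel `(V, W, V̂)` for the conditional problem has a `(V, V̂)`-marginal with the same
distortion and `I(V; V̂) ≤ I(V; W) + I(V; V̂ | W)`. Conversely, a test channel `(V, V̂)` extends to
`(V, W, V̂)` by drawing `V̂` conditionally independent of `W` given `V`; then `I(V̂; W | V) = 0`,
and the chain rule gives `I(V; V̂ | W) ≤ I(V; V̂)`. Everything rests on `I(X; Y | Z) ≥ 0`, which is
Gibbs' inequality for the joint law of `(X, Y, Z)` against the law making `X` and `Y`
conditionally independent given `Z` with the same `(X, Z)`- and `(Y, Z)`-marginals.
-/

open Real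

section Entropy

variable {Ω : Type*} [MeasurableSpace Ω] (μ : Measure Ω) {α β : Type*}

lemma shEnt_comp_of_injective [Fintype α] [Fintype β] {g : α → β} (hg : g.Injective)
    (X : Ω → α) : shEnt μ (fun ω => g (X ω)) = shEnt μ X := by
  classical
  unfold shEnt
  rw [tsum_fintype, tsum_fintype, ← Finset.sum_subset (Finset.subset_univ (Finset.univ.image g)),
    Finset.sum_image fun a _ b _ h => hg h]
  · refine Finset.sum_congr rfl fun a _ => ?_
    simp only [Set.preimage, Set.mem_singleton_iff, hg.eq_iff]
  · intro b _ hb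
    have : (fun ω => g (X ω)) ⁻¹' {b} = ∅ := by
      ext ω
      simpa using fun h => hb (Finset.mem_image.2 ⟨X ω, Finset.mem_univ _, h⟩)
    simp [this, plog]

lemma measureReal_preimage_singleton_le_comp [IsFiniteMeasure μ] (X : Ω → α) (g : α → β)
    (a : α) : μ.real (X ⁻¹' {a}) ≤ μ.real ((fun ω => g (X ω)) ⁻¹' {g a}) :=
  measureReal_mono fun ω (h : X ω = a) => congrArg g h

variable [DiscreteMeasurableSpace Ω] [IsFiniteMeasure μ] [Fintype α]

lemma measureReal_comp_preimage_singleton [DecidableEq β] (X : Ω → α) (g : α → β) (b : β) :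
    μ.real ((fun ω => g (X ω)) ⁻¹' {b}) = ∑ a with g a = b, μ.real (X ⁻¹' {a}) := by
  rw [sum_measureReal_preimage_singleton _ fun _ _ => .of_discrete]
  congr 1
  ext ω
  simp

lemma shEnt_comp_eq_neg_sum [Fintype β] (X : Ω → α) (g : α → β) :
    shEnt μ (fun ω => g (X ω)) =
      -∑ a, μ.real (X ⁻¹' {a}) * logb 2 (μ.real ((fun ω => g (X ω)) ⁻¹' {g a})) := by
  classical
  set P : β → ℝ := fun b => μ.real ((fun ω => g (X ω)) ⁻¹' {b})
  calc shEnt μ (fun ω => g (X ω)) = -∑ b, P b * logb 2 (P b) := by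
        simp only [shEnt, plog, tsum_fintype, Finset.sum_neg_distrib]; rfl
    _ = -∑ b, ∑ a with g a = b, μ.real (X ⁻¹' {a}) * logb 2 (P (g a)) := by
        congr 1
        refine Finset.sum_congr rfl fun b _ => ?_
        nth_rewrite 1 [show P b = _ from measureReal_comp_preimage_singleton μ X g b]
        rw [Finset.sum_mul]
        exact Finset.sum_congr rfl fun a ha => by rw [(Finset.mem_filter.1 ha).2]
    _ = _ := congrArg Neg.neg (Finset.sum_fiberwise _ _ _)

lemma sum_measureReal_preimage_singleton_eq_univ (X : Ω → α) :
    ∑ a, μ.real (X ⁻¹' {a}) = μ.real Set.univ := by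
  rw [sum_measureReal_preimage_singleton _ fun _ _ => .of_discrete]
  simp

lemma sum_measureReal_preimage_prodMk [Fintype β] (X : Ω → α) (Y : Ω → β) (b : β) :
    ∑ a, μ.real ((fun ω => (X ω, Y ω)) ⁻¹' {(a, b)}) = μ.real (Y ⁻¹' {b}) := by
  classical
  rw [show Y ⁻¹' {b} = (fun ω => (X ω, Y ω).2) ⁻¹' {b} from rfl,
    measureReal_comp_preimage_singleton, Finset.sum_filter, Fintype.sum_prod_type]
  simp

end Entropy

lemma sub_le_mul_log_div {p r : ℝ} (hp : 0 ≤ p) (hr : 0 ≤ r) (hpr : 0 < p → 0 < r) :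
    p - r ≤ p * log (p / r) := by
  rcases hp.eq_or_lt with rfl | hp
  · simpa using hr
  have hr := hpr hp
  have := mul_le_mul_of_nonneg_left (one_sub_inv_le_log_of_pos (div_pos hp hr)) hp.le
  rwa [inv_div, mul_sub, mul_one, mul_div_cancel₀ _ hp.ne'] at this

lemma sum_mul_logb_div_nonneg {ι : Type*} [Fintype ι] {p r : ι → ℝ} (hp : ∀ i, 0 ≤ p i)
    (hr : ∀ i, 0 ≤ r i) (hpr : ∀ i, 0 < p i → 0 < r i) (hsum : ∑ i, r i ≤ ∑ i, p i) :
    0 ≤ ∑ i, p i * logb 2 (p i / r i) := by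
  simp_rw [logb, ← mul_div_assoc, ← Finset.sum_div]
  refine div_nonneg ?_ (log_nonneg one_le_two)
  calc (0 : ℝ) ≤ ∑ i, (p i - r i) := by rw [Finset.sum_sub_distrib]; linarith
    _ ≤ _ := Finset.sum_le_sum fun i _ => sub_le_mul_log_div (hp i) (hr i) (hpr i)

lemma mul_logb_div_div_eq {p a b c : ℝ} (hp : 0 ≤ p) (ha : p ≤ a) (hb : p ≤ b) (hc : p ≤ c) :
    p * logb 2 (p / (a * b / c)) = p * (logb 2 p + logb 2 c - logb 2 a - logb 2 b) := by
  rcases hp.eq_or_lt with rfl | hp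
  · simp
  have ha := hp.trans_le ha
  have hb := hp.trans_le hb
  have hc := hp.trans_le hc
  rw [logb_div hp.ne' (by positivity), logb_div (by positivity) hc.ne', logb_mul ha.ne' hb.ne']
  ring

section CondMutInf

variable {Ω : Type*} [MeasurableSpace Ω] (μ : Measure Ω) {S T U : Type*}

/-- The mass of `(x, y, z)` under the law with the same `(X, Z)`- and `(Y, Z)`-marginals as
`(X, Y, Z)` that makes `X` and `Y` conditionally independent given `Z`. -/
noncomputable def condIndepMass (X : Ω → S) (Y : Ω → T) (Z : Ω → U) (q : S × T × U) : ℝ :=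
  μ.real ((fun ω => (X ω, Z ω)) ⁻¹' {(q.1, q.2.2)}) *
    μ.real ((fun ω => (Y ω, Z ω)) ⁻¹' {(q.2.1, q.2.2)}) / μ.real (Z ⁻¹' {q.2.2})

variable [DiscreteMeasurableSpace Ω] [IsFiniteMeasure μ] [Fintype S] [Fintype T] [Fintype U]
  (X : Ω → S) (Y : Ω → T) (Z : Ω → U)

lemma sum_condIndepMass : ∑ q, condIndepMass μ X Y Z q = μ.real Set.univ := by
  calc ∑ q, condIndepMass μ X Y Z q
      = ∑ u, (∑ s, μ.real ((fun ω => (X ω, Z ω)) ⁻¹' {(s, u)})) *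
          (∑ t, μ.real ((fun ω => (Y ω, Z ω)) ⁻¹' {(t, u)})) / μ.real (Z ⁻¹' {u}) := by
        simp only [condIndepMass, Fintype.sum_prod_type, Finset.sum_mul_sum, Finset.sum_div]
        conv_rhs => rw [Finset.sum_comm]
        exact Finset.sum_congr rfl fun s _ => Finset.sum_comm
    _ = ∑ u, μ.real (Z ⁻¹' {u}) := by
        simp_rw [sum_measureReal_preimage_prodMk, mul_self_div_self]
    _ = μ.real Set.univ := sum_measureReal_preimage_singleton_eq_univ μ Z

lemma condMutInf_eq_sum_mul_logb :
    condMutInf μ X Y Z = ∑ q, μ.real ((fun ω => (X ω, Y ω, Z ω)) ⁻¹' {q}) *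
      logb 2 (μ.real ((fun ω => (X ω, Y ω, Z ω)) ⁻¹' {q}) / condIndepMass μ X Y Z q) := by
  set W := fun ω => (X ω, Y ω, Z ω)
  have hXYZ : shEnt μ (fun ω => ((X ω, Y ω), Z ω)) = shEnt μ W :=
    shEnt_comp_of_injective μ (g := fun q : S × T × U => ((q.1, q.2.1), q.2.2))
      (fun _ _ h => by simpa [Prod.ext_iff, and_assoc] using h) W
  have hW : shEnt μ W = -∑ q, μ.real (W ⁻¹' {q}) * logb 2 (μ.real (W ⁻¹' {q})) :=
    shEnt_comp_eq_neg_sum μ W id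
  have hXZ : shEnt μ (fun ω => (X ω, Z ω)) = -∑ q, μ.real (W ⁻¹' {q}) *
      logb 2 (μ.real ((fun ω => (X ω, Z ω)) ⁻¹' {(q.1, q.2.2)})) :=
    shEnt_comp_eq_neg_sum μ W fun q => (q.1, q.2.2)
  have hYZ : shEnt μ (fun ω => (Y ω, Z ω)) = -∑ q, μ.real (W ⁻¹' {q}) *
      logb 2 (μ.real ((fun ω => (Y ω, Z ω)) ⁻¹' {(q.2.1, q.2.2)})) :=
    shEnt_comp_eq_neg_sum μ W fun q => (q.2.1, q.2.2)
  have hZ : shEnt μ Z = -∑ q, μ.real (W ⁻¹' {q}) * logb 2 (μ.real (Z ⁻¹' {q.2.2})) :=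
    shEnt_comp_eq_neg_sum μ W fun q => q.2.2
  have hterm (q : S × T × U) : μ.real (W ⁻¹' {q}) *
      logb 2 (μ.real (W ⁻¹' {q}) / condIndepMass μ X Y Z q) = μ.real (W ⁻¹' {q}) *
      (logb 2 (μ.real (W ⁻¹' {q})) + logb 2 (μ.real (Z ⁻¹' {q.2.2})) -
        logb 2 (μ.real ((fun ω => (X ω, Z ω)) ⁻¹' {(q.1, q.2.2)})) -
        logb 2 (μ.real ((fun ω => (Y ω, Z ω)) ⁻¹' {(q.2.1, q.2.2)}))) :=
    mul_logb_div_div_eq measureReal_nonneg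
      (measureReal_preimage_singleton_le_comp μ W (fun q => (q.1, q.2.2)) q)
      (measureReal_preimage_singleton_le_comp μ W (fun q => (q.2.1, q.2.2)) q)
      (measureReal_preimage_singleton_le_comp μ W (fun q => q.2.2) q)
  simp only [condMutInf, shCondEnt, hXYZ, hW, hXZ, hYZ, hZ, hterm, mul_add, mul_sub,
    Finset.sum_add_distrib, Finset.sum_sub_distrib]
  ring

lemma condMutInf_nonneg : 0 ≤ condMutInf μ X Y Z := by
  set W := fun ω => (X ω, Y ω, Z ω)
  rw [condMutInf_eq_sum_mul_logb]
  refine sum_mul_logb_div_nonneg (fun _ => measureReal_nonneg)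
    (fun _ => by unfold condIndepMass; positivity) (fun q hq => ?_) ?_
  · have := hq.trans_le (measureReal_preimage_singleton_le_comp μ W (fun q => (q.1, q.2.2)) q)
    have := hq.trans_le (measureReal_preimage_singleton_le_comp μ W (fun q => (q.2.1, q.2.2)) q)
    have := hq.trans_le (measureReal_preimage_singleton_le_comp μ W (fun q => q.2.2) q)
    unfold condIndepMass
    positivity
  · rw [sum_condIndepMass, sum_measureReal_preimage_singleton_eq_univ]

lemma condMutInf_eq_zero_of_forall_eq_condIndepMass
    (h : ∀ q, μ.real ((fun ω => (X ω, Y ω, Z ω)) ⁻¹' {q}) = condIndepMass μ X Y Z q) :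
    condMutInf μ X Y Z = 0 := by
  rw [condMutInf_eq_sum_mul_logb]
  refine Finset.sum_eq_zero fun q _ => ?_
  rw [← h q]
  rcases eq_or_ne (μ.real ((fun ω => (X ω, Y ω, Z ω)) ⁻¹' {q})) 0 with h0 | h0
  · rw [h0, zero_mul]
  · rw [div_self h0, logb_one, mul_zero]

end CondMutInf

section Identities

variable {Ω : Type*} [MeasurableSpace Ω] (μ : Measure Ω) {S T U : Type*}

lemma mutInf_map {Ω' : Type*} [MeasurableSpace Ω'] [DiscreteMeasurableSpace Ω'] {f : Ω → Ω'}
    (hf : Measurable f) (X : Ω' → S) (Y : Ω' → T) :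
    mutInf (μ.map f) X Y = mutInf μ (fun ω => X (f ω)) (fun ω => Y (f ω)) := by
  simp only [mutInf, shEnt, Measure.map_apply hf .of_discrete]
  rfl

variable [Fintype S] [Fintype T] [Fintype U] (X : Ω → S) (Y : Ω → T) (Z : Ω → U)

lemma shEnt_prodMk_comm : shEnt μ (fun ω => (X ω, Y ω)) = shEnt μ (fun ω => (Y ω, X ω)) :=
  shEnt_comp_of_injective μ (g := Prod.swap) Prod.swap_injective fun ω => (Y ω, X ω)

lemma shEnt_prodMk_unit : shEnt μ (fun ω => (X ω, ())) = shEnt μ X :=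
  shEnt_comp_of_injective μ (g := fun s => (s, ())) (fun _ _ h => (Prod.ext_iff.1 h).1) X

lemma mutInf_comm : mutInf μ X Y = mutInf μ Y X := by
  rw [mutInf, mutInf, shEnt_prodMk_comm]
  ring

lemma condMutInf_comm : condMutInf μ X Y Z = condMutInf μ Y X Z := by
  have : shEnt μ (fun ω => ((X ω, Y ω), Z ω)) = shEnt μ (fun ω => ((Y ω, X ω), Z ω)) :=
    shEnt_comp_of_injective μ (g := fun q : (T × S) × U => ((q.1.2, q.1.1), q.2))
      (fun _ _ h => by simp only [Prod.ext_iff] at h ⊢; tauto) fun ω => ((Y ω, X ω), Z ω)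
  simp only [condMutInf, shCondEnt, this]
  ring

/-- Both sides are `I(X; (Y, Z))`, by the chain rule. -/
lemma mutInf_add_condMutInf_comm :
    mutInf μ X Z + condMutInf μ X Y Z = mutInf μ X Y + condMutInf μ X Z Y := by
  have : shEnt μ (fun ω => ((X ω, Y ω), Z ω)) = shEnt μ (fun ω => ((X ω, Z ω), Y ω)) :=
    shEnt_comp_of_injective μ (g := fun q : (S × U) × T => ((q.1.1, q.2), q.1.2))
      (fun _ _ h => by simp only [Prod.ext_iff] at h ⊢; tauto) fun ω => ((X ω, Z ω), Y ω)
  simp only [mutInf, condMutInf, shCondEnt, this, shEnt_prodMk_comm μ Y Z]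
  ring

lemma mutInf_eq_condMutInf_const [IsProbabilityMeasure μ] :
    mutInf μ X Y = condMutInf μ X Y fun _ => () := by
  have hconst : shEnt μ (fun _ => ()) = 0 := by simp [shEnt, plog]
  simp only [condMutInf, shCondEnt, shEnt_prodMk_unit, hconst, mutInf]
  ring

variable [DiscreteMeasurableSpace Ω]

lemma mutInf_nonneg [IsProbabilityMeasure μ] : 0 ≤ mutInf μ X Y := by
  rw [mutInf_eq_condMutInf_const]
  exact condMutInf_nonneg μ X Y _

lemma mutInf_le_mutInf_add_condMutInf [IsFiniteMeasure μ] :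
    mutInf μ X Y ≤ mutInf μ X Z + condMutInf μ X Y Z := by
  linarith [mutInf_add_condMutInf_comm μ X Y Z, condMutInf_nonneg μ X Z Y]

lemma condMutInf_le_mutInf_of_condMutInf_eq_zero [IsProbabilityMeasure μ]
    (h : condMutInf μ X Z Y = 0) : condMutInf μ X Y Z ≤ mutInf μ X Y := by
  linarith [mutInf_add_condMutInf_comm μ X Y Z, mutInf_nonneg μ X Z]

end Identities

section Coupling

open scoped ENNReal

variable {α β γ : Type*} [MeasurableSpace α] [MeasurableSpace β] [MeasurableSpace γ]

lemma map_apply_singleton_eq_sum [MeasurableSingletonClass α] [DecidableEq α] {δ : Type*}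
    [Fintype δ] [MeasurableSpace δ] [DiscreteMeasurableSpace δ] (μ : Measure δ) (f : δ → α)
    (a : α) : μ.map f {a} = ∑ x with f x = a, μ {x} := by
  rw [Measure.map_apply .of_discrete (.singleton a), sum_measure_singleton]
  congr 1
  ext
  simp

lemma measure_singleton_le_map_fst [MeasurableSingletonClass α] (P : Measure (α × β)) (a : α)
    (b : β) : P {(a, b)} ≤ P.map Prod.fst {a} := by
  rw [Measure.map_apply measurable_fst (.singleton a)]
  exact measure_mono fun x (hx : x = (a, b)) => by simp [hx]

lemma sum_measure_singleton_eq_map_fst [MeasurableSingletonClass α] [Fintype β]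
    [MeasurableSingletonClass β] (P : Measure (α × β)) (a : α) :
    ∑ b, P {(a, b)} = P.map Prod.fst {a} := by
  rw [Measure.map_apply measurable_fst (.singleton a), measure_preimage_fst_singleton_eq_sum]

noncomputable def condIndepCouplingMass (P : Measure (α × β)) (Q : Measure (α × γ))
    (q : α × β × γ) : ℝ≥0∞ :=
  P {(q.1, q.2.1)} * Q {(q.1, q.2.2)} / P.map Prod.fst {q.1}

variable (P : Measure (α × β)) (Q : Measure (α × γ))

lemma sum_condIndepCouplingMass_snd [MeasurableSingletonClass α] [Fintype γ]
    [MeasurableSingletonClass γ] [IsFiniteMeasure P] (hPQ : P.map Prod.fst = Q.map Prod.fst)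
    (a : α) (b : β) :
    ∑ c, condIndepCouplingMass P Q (a, b, c) = P {(a, b)} := by
  simp_rw [condIndepCouplingMass, div_eq_mul_inv, ← Finset.sum_mul, ← Finset.mul_sum,
    sum_measure_singleton_eq_map_fst, ← hPQ, ← div_eq_mul_inv]
  exact ENNReal.mul_div_cancel_right'
    (fun h => nonpos_iff_eq_zero.1 (h ▸ measure_singleton_le_map_fst P a b))
    (fun h => absurd h (measure_ne_top _ _))

lemma sum_condIndepCouplingMass_fst [MeasurableSingletonClass α] [Fintype β]
    [MeasurableSingletonClass β] [IsFiniteMeasure Q] (hPQ : P.map Prod.fst = Q.map Prod.fst)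
    (a : α) (c : γ) :
    ∑ b, condIndepCouplingMass P Q (a, b, c) = Q {(a, c)} := by
  simp_rw [condIndepCouplingMass, div_eq_mul_inv, ← Finset.sum_mul,
    sum_measure_singleton_eq_map_fst, hPQ, mul_comm (Q.map Prod.fst {a}), ← div_eq_mul_inv]
  exact ENNReal.mul_div_cancel_right'
    (fun h => nonpos_iff_eq_zero.1 (h ▸ measure_singleton_le_map_fst Q a c))
    (fun h => absurd h (measure_ne_top _ _))

variable [Fintype α] [Fintype β] [Fintype γ] [DiscreteMeasurableSpace α]
  [DiscreteMeasurableSpace β] [DiscreteMeasurableSpace γ]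

lemma map_proj12_apply_singleton (ν : Measure (α × β × γ)) (a : α) (b : β) :
    ν.map (fun q => (q.1, q.2.1)) {(a, b)} = ∑ c, ν {(a, b, c)} := by
  classical
  rw [map_apply_singleton_eq_sum, Finset.sum_filter]
  simp only [Fintype.sum_prod_type, Prod.mk.injEq, ite_and]
  simp [Finset.sum_comm (γ := β)]

lemma map_proj13_apply_singleton (ν : Measure (α × β × γ)) (a : α) (c : γ) :
    ν.map (fun q => (q.1, q.2.2)) {(a, c)} = ∑ b, ν {(a, b, c)} := by
  classical
  rw [map_apply_singleton_eq_sum, Finset.sum_filter]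
  simp [Fintype.sum_prod_type, Prod.ext_iff, ite_and]

lemma sum_condIndepCouplingMass [IsProbabilityMeasure P] (hPQ : P.map Prod.fst = Q.map Prod.fst) :
    ∑ q, condIndepCouplingMass P Q q = 1 := by
  simp only [Fintype.sum_prod_type, sum_condIndepCouplingMass_snd P Q hPQ]
  rw [← Fintype.sum_prod_type' fun a b => P {(a, b)}, sum_measure_singleton, Finset.coe_univ,
    measure_univ]

lemma exists_condIndep_coupling [IsProbabilityMeasure P] [IsFiniteMeasure Q]
    (hPQ : P.map Prod.fst = Q.map Prod.fst) :
    ∃ ν : Measure (α × β × γ), IsProbabilityMeasure ν ∧ ν.map (fun q => (q.1, q.2.1)) = P ∧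
      ν.map (fun q => (q.1, q.2.2)) = Q ∧
      condMutInf ν (fun q => q.2.1) (fun q => q.2.2) (fun q => q.1) = 0 := by
  set ν := (PMF.ofFintype _ (sum_condIndepCouplingMass P Q hPQ)).toMeasure
  have hν (q) : ν {q} = condIndepCouplingMass P Q q :=
    PMF.toMeasure_apply_singleton _ q (.singleton q)
  have hνP : ν.map (fun q => (q.1, q.2.1)) = P := Measure.ext_of_singleton fun ⟨a, b⟩ => by
    simp only [map_proj12_apply_singleton, hν, sum_condIndepCouplingMass_snd P Q hPQ]
  have hνQ : ν.map (fun q => (q.1, q.2.2)) = Q := Measure.ext_of_singleton fun ⟨a, c⟩ => by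
    simp only [map_proj13_apply_singleton, hν, sum_condIndepCouplingMass_fst P Q hPQ]
  refine ⟨ν, inferInstance, hνP, hνQ,
    condMutInf_eq_zero_of_forall_eq_condIndepMass _ _ _ _ fun ⟨b, c, a⟩ => ?_⟩
  have hW : (fun q : α × β × γ => (q.2.1, q.2.2, q.1)) ⁻¹' {(b, c, a)} = {(a, b, c)} := by
    ext
    simp only [Set.mem_preimage, Set.mem_singleton_iff, Prod.ext_iff]
    tauto
  have hXZ : ν.real ((fun q : α × β × γ => (q.2.1, q.1)) ⁻¹' {(b, a)}) = P.real {(a, b)} := by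
    rw [← hνP, map_measureReal_apply .of_discrete (.singleton _)]
    congr 1; ext; simp [Prod.ext_iff, and_comm]
  have hYZ : ν.real ((fun q : α × β × γ => (q.2.2, q.1)) ⁻¹' {(c, a)}) = Q.real {(a, c)} := by
    rw [← hνQ, map_measureReal_apply .of_discrete (.singleton _)]
    congr 1; ext; simp [Prod.ext_iff, and_comm]
  have hZ : ν.real ((fun q : α × β × γ => q.1) ⁻¹' {a}) = (P.map Prod.fst).real {a} := by
    rw [← hνP, Measure.map_map measurable_fst .of_discrete,
      map_measureReal_apply .of_discrete (.singleton _)]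
    rfl
  simp only [condIndepMass, hW, hXZ, hYZ, hZ, measureReal_def, hν, condIndepCouplingMass,
    ENNReal.toReal_div, ENNReal.toReal_mul]

end Coupling

section Transfer

variable {α β γ : Type*} [Fintype α] [Fintype β] [Fintype γ]
  [MeasurableSpace α] [DiscreteMeasurableSpace α] [MeasurableSpace β] [DiscreteMeasurableSpace β]
  [MeasurableSpace γ] [DiscreteMeasurableSpace γ] (ν : Measure (α × β × γ))

lemma map_proj13_map_fst :
    (ν.map fun q => (q.1, q.2.2)).map Prod.fst = (ν.map fun q => (q.1, q.2.1)).map Prod.fst := by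
  rw [Measure.map_map measurable_fst .of_discrete, Measure.map_map measurable_fst .of_discrete]
  rfl

variable [IsProbabilityMeasure ν]

lemma mutInf_map_proj13_le :
    mutInf (ν.map fun q => (q.1, q.2.2)) Prod.fst Prod.snd ≤
      condMutInf ν (fun q => q.1) (fun q => q.2.2) (fun q => q.2.1) +
        mutInf (ν.map fun q => (q.1, q.2.1)) Prod.fst Prod.snd := by
  rw [mutInf_map _ .of_discrete, mutInf_map _ .of_discrete, add_comm]
  exact mutInf_le_mutInf_add_condMutInf ν _ _ _

lemma condMutInf_le_mutInf_map_proj13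
    (h : condMutInf ν (fun q => q.2.1) (fun q => q.2.2) (fun q => q.1) = 0) :
    condMutInf ν (fun q => q.1) (fun q => q.2.2) (fun q => q.2.1) ≤
      mutInf (ν.map fun q => (q.1, q.2.2)) Prod.fst Prod.snd := by
  rw [mutInf_map _ .of_discrete, mutInf_comm, condMutInf_comm]
  exact condMutInf_le_mutInf_of_condMutInf_eq_zero ν _ _ _ (by rwa [condMutInf_comm])

end Transfer

lemma sum_map_measureReal_singleton_mul {δ ε : Type*} [Fintype δ] [Fintype ε] [MeasurableSpace δ]
    [DiscreteMeasurableSpace δ] [MeasurableSpace ε] [DiscreteMeasurableSpace ε] (μ : Measure δ)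
    [IsFiniteMeasure μ] (f : δ → ε) (c : ε → ℝ) :
    ∑ y, (μ.map f).real {y} * c y = ∑ x, μ.real {x} * c (f x) := by
  simp_rw [← smul_eq_mul, ← integral_fintype (.of_finite),
    integral_map Measurable.of_discrete.aemeasurable Measurable.of_discrete.aestronglyMeasurable]

lemma csInf_le_csInf_add {s t : Set ℝ} {c : ℝ} (hs : BddBelow s) (ht : t.Nonempty)
    (h : ∀ b ∈ t, ∃ a ∈ s, a ≤ b + c) : sInf s ≤ sInf t + c := by
  rw [← sub_le_iff_le_add]
  refine le_csInf ht fun b hb => ?_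
  obtain ⟨a, ha, hab⟩ := h b hb
  exact sub_le_iff_le_add.2 ((csInf_le hs ha).trans hab)

theorem gray_conditional_rate_distortion_general
    {𝒱 𝒲 Vhat : Type*}
    [Fintype 𝒱] [Fintype 𝒲] [Fintype Vhat]
    [MeasurableSpace 𝒱] [DiscreteMeasurableSpace 𝒱]
    [MeasurableSpace 𝒲] [DiscreteMeasurableSpace 𝒲]
    [MeasurableSpace Vhat] [DiscreteMeasurableSpace Vhat]
    (P : Measure (𝒱 × 𝒲)) [IsProbabilityMeasure P]
    (d : 𝒱 → Vhat → ℝ)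
    (D : ℝ)
    (RV RVW : ℝ)
    (hRV : RV = sInf {r : ℝ | ∃ ν : Measure (𝒱 × Vhat), IsProbabilityMeasure ν ∧
      ν.map Prod.fst = P.map Prod.fst ∧
      (∑ q : 𝒱 × Vhat, (ν {q}).toReal * d q.1 q.2) ≤ D ∧
      r = mutInf ν Prod.fst Prod.snd})
    (hRVW : RVW = sInf {r : ℝ | ∃ ν : Measure (𝒱 × 𝒲 × Vhat), IsProbabilityMeasure ν ∧
      ν.map (fun q => (q.1, q.2.1)) = P ∧
      (∑ q : 𝒱 × 𝒲 × Vhat, (ν {q}).toReal * d q.1 q.2.2) ≤ D ∧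
      r = condMutInf ν (fun q => q.1) (fun q => q.2.2) (fun q => q.2.1)})
    (hfeas : ∃ ν : Measure (𝒱 × 𝒲 × Vhat), IsProbabilityMeasure ν ∧
      ν.map (fun q => (q.1, q.2.1)) = P ∧
      (∑ q : 𝒱 × 𝒲 × Vhat, (ν {q}).toReal * d q.1 q.2.2) ≤ D) :
    RVW ≤ RV ∧ RV ≤ RVW + mutInf P Prod.fst Prod.snd := by
  have hdist (ν : Measure (𝒱 × 𝒲 × Vhat)) [IsFiniteMeasure ν] :
      ∑ q : 𝒱 × Vhat, ((ν.map fun q => (q.1, q.2.2)) {q}).toReal * d q.1 q.2 =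
        ∑ q, (ν {q}).toReal * d q.1 q.2.2 :=
    sum_map_measureReal_singleton_mul ν _ fun q : 𝒱 × Vhat => d q.1 q.2
  have hmap (ν : Measure (𝒱 × 𝒲 × Vhat)) [IsProbabilityMeasure ν] :
      IsProbabilityMeasure (ν.map fun q => (q.1, q.2.2)) :=
    Measure.isProbabilityMeasure_map Measurable.of_discrete.aemeasurable
  obtain ⟨ν₀, hν₀, hν₀P, hν₀d⟩ := hfeas
  subst hRV hRVW
  constructor
  · refine (csInf_le_csInf_add (c := 0) ?_ ?_ ?_).trans_eq (add_zero _)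
    · exact ⟨0, by rintro _ ⟨ν, hν, -, -, rfl⟩; exact condMutInf_nonneg ν _ _ _⟩
    · exact ⟨_, _, hmap ν₀, hν₀P ▸ map_proj13_map_fst ν₀, (hdist ν₀).trans_le hν₀d, rfl⟩
    rintro _ ⟨ν', hν', hν'P, hν'd, rfl⟩
    obtain ⟨ν, hν, hνP, hνν', hν0⟩ := exists_condIndep_coupling P ν' hν'P.symm
    refine ⟨_, ⟨ν, hν, hνP, by rwa [← hdist ν, hνν'], rfl⟩, ?_⟩
    rw [add_zero, ← hνν']
    exact condMutInf_le_mutInf_map_proj13 ν hν0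
  · refine csInf_le_csInf_add ⟨0, by rintro _ ⟨ν, hν, -, -, rfl⟩; exact mutInf_nonneg ν _ _⟩
      ⟨_, ν₀, hν₀, hν₀P, hν₀d, rfl⟩ ?_
    rintro _ ⟨ν, hν, hνP, hνd, rfl⟩
    refine ⟨_, ⟨_, hmap ν, hνP ▸ map_proj13_map_fst ν, (hdist ν).trans_le hνd, rfl⟩, ?_⟩
    exact hνP ▸ mutInf_map_proj13_le ν

/-- Gray's conditional rate-distortion lemma:
`R_{V|W}(D) ≤ R_V(D) ≤ R_{V|W}(D) + I(V;W)`, where the rate-distortion functions are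
infima of (conditional) mutual informations over joint laws extending the given joint law
of `(V, W)` and meeting the expected-distortion constraint `D`. -/
theorem gray_conditional_rate_distortion
    {𝒱 𝒲 Vhat : Type*}
    [Fintype 𝒱] [Fintype 𝒲] [Fintype Vhat]
    [MeasurableSpace 𝒱] [DiscreteMeasurableSpace 𝒱]
    [MeasurableSpace 𝒲] [DiscreteMeasurableSpace 𝒲]
    [MeasurableSpace Vhat] [DiscreteMeasurableSpace Vhat]
    (P : Measure (𝒱 × 𝒲)) [IsProbabilityMeasure P]
    (d : 𝒱 → Vhat → ℝ) (hd : ∀ v vh, 0 ≤ d v vh)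
    (D : ℝ) (hD : 0 ≤ D)
    (RV RVW : ℝ)
    (hRV : RV = sInf {r : ℝ | ∃ ν : Measure (𝒱 × Vhat), IsProbabilityMeasure ν ∧
      ν.map Prod.fst = P.map Prod.fst ∧
      (∑ q : 𝒱 × Vhat, (ν {q}).toReal * d q.1 q.2) ≤ D ∧
      r = mutInf ν Prod.fst Prod.snd})
    (hRVW : RVW = sInf {r : ℝ | ∃ ν : Measure (𝒱 × 𝒲 × Vhat), IsProbabilityMeasure ν ∧
      ν.map (fun q => (q.1, q.2.1)) = P ∧
      (∑ q : 𝒱 × 𝒲 × Vhat, (ν {q}).toReal * d q.1 q.2.2) ≤ D ∧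
      r = condMutInf ν (fun q => q.1) (fun q => q.2.2) (fun q => q.2.1)})
    (hfeas : ∃ ν : Measure (𝒱 × 𝒲 × Vhat), IsProbabilityMeasure ν ∧
      ν.map (fun q => (q.1, q.2.1)) = P ∧
      (∑ q : 𝒱 × 𝒲 × Vhat, (ν {q}).toReal * d q.1 q.2.2) ≤ D) :
    RVW ≤ RV ∧ RV ≤ RVW + mutInf P Prod.fst Prod.snd :=
  gray_conditional_rate_distortion_general P d D RV RVW hRV hRVW hfeas
end

section
/- (Eigenvalue lower bound for the AR(1) Toeplitz covariance.) Let 0 < ρ < 1 and t ≥ 1, and let T_t(ρ) be the t × t real symmetric Toeplitz matrix with entries [T_t(ρ)]_{ij} = ρ^{|i−j|}. Then every eigenvalue of T_t(ρ) is at least (1−ρ)/(1+ρ); equivalently, for every x ∈ ℝ^t, xᵀ·T_t(ρ)·x ≥ ((1−ρ)/(1+ρ))·‖x‖². -/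
open Matrix Finset

/-- recursion for the causal filter -/
private def ar1u (ρ : ℝ) (y : ℕ → ℝ) : ℕ → ℝ
  | 0 => 0
  | n+1 => ρ * ar1u ρ y n + y n

private lemma ar1u_formula (ρ : ℝ) (y : ℕ → ℝ) :
    ∀ n, ρ * ar1u ρ y n = ∑ j ∈ range n, ρ ^ (n - j) * y j := by
  intro n
  induction n with
  | zero => simp [ar1u]
  | succ n ih =>
    rw [Finset.sum_range_succ]
    have : ∀ j ∈ range n, ρ ^ (n + 1 - j) * y j = ρ * (ρ ^ (n - j) * y j) := by
      intro j hj
      have hj' : j < n := Finset.mem_range.mp hj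
      have : n + 1 - j = (n - j) + 1 := by omega
      rw [this, pow_succ]
      ring
    rw [Finset.sum_congr rfl this, ← Finset.mul_sum, ← ih]
    simp [ar1u]
    ring

private lemma ar1_key_ineq (ρ : ℝ) (hρ0 : 0 < ρ) (hρ1 : ρ < 1) (y : ℕ → ℝ) :
    ∀ n, (1 - ρ) / (1 + ρ) * ∑ k ∈ range n, y k ^ 2 + ρ * (ar1u ρ y n) ^ 2 ≤
      ∑ k ∈ range n, (y k ^ 2 + 2 * ρ * y k * ar1u ρ y k) := by
  have h1ρ : (0:ℝ) < 1 + ρ := by linarith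
  have hc : (1 - ρ) / (1 + ρ) * (1 + ρ) = 1 - ρ := by field_simp
  intro n
  induction n with
  | zero => simp [ar1u]
  | succ n ih =>
    rw [Finset.sum_range_succ, Finset.sum_range_succ]
    have hrec : ar1u ρ y (n + 1) = ρ * ar1u ρ y n + y n := rfl
    rw [hrec]
    set u := ar1u ρ y n
    set c := (1 - ρ) / (1 + ρ)
    nlinarith [sq_nonneg (y n + (1 + ρ) * u), mul_pos hρ0 (mul_pos (sub_pos.mpr hρ1) h1ρ),
      mul_nonneg (mul_nonneg hρ0.le (sub_pos.mpr hρ1).le) (sq_nonneg (y n + (1 + ρ) * u))]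

private lemma ar1_double_sum (ρ : ℝ) (y : ℕ → ℝ) (t : ℕ) :
    ∑ i ∈ range t, ∑ j ∈ range t, ρ ^ (((i:ℤ) - (j:ℤ)).natAbs) * (y i * y j) =
      ∑ k ∈ range t, (y k ^ 2 + 2 * ρ * y k * ar1u ρ y k) := by
  have hsplit : ∀ i ∈ range t,
      ∑ j ∈ range t, ρ ^ (((i:ℤ) - (j:ℤ)).natAbs) * (y i * y j) =
        (∑ j ∈ range (i+1), ρ ^ (((i:ℤ) - (j:ℤ)).natAbs) * (y i * y j)) +
        ∑ j ∈ Ico (i+1) t, ρ ^ (((i:ℤ) - (j:ℤ)).natAbs) * (y i * y j) := by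
    intro i hi
    have hi' : i < t := Finset.mem_range.mp hi
    simp only [Finset.range_eq_Ico]
    exact (Finset.sum_Ico_consecutive _ (Nat.zero_le (i+1)) (by omega : i + 1 ≤ t)).symm
  rw [Finset.sum_congr rfl hsplit, Finset.sum_add_distrib]
  have hlow : ∀ i ∈ range t,
      ∑ j ∈ range (i+1), ρ ^ (((i:ℤ) - (j:ℤ)).natAbs) * (y i * y j) =
        y i ^ 2 + ρ * y i * ar1u ρ y i := by
    intro i _
    rw [Finset.sum_range_succ]
    have h1 : ∀ j ∈ range i, ρ ^ (((i:ℤ) - (j:ℤ)).natAbs) * (y i * y j) =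
        y i * (ρ ^ (i - j) * y j) := by
      intro j hj
      have hj' : j < i := Finset.mem_range.mp hj
      have : ((i:ℤ) - (j:ℤ)).natAbs = i - j := by omega
      rw [this]; ring
    rw [Finset.sum_congr rfl h1, ← Finset.mul_sum, ← ar1u_formula]
    simp; ring
  have hupp : ∑ i ∈ range t, ∑ j ∈ Ico (i+1) t, ρ ^ (((i:ℤ) - (j:ℤ)).natAbs) * (y i * y j) =
      ∑ j ∈ range t, ρ * y j * ar1u ρ y j := by
    rw [Finset.range_eq_Ico, Finset.sum_Ico_Ico_comm']
    refine Finset.sum_congr rfl fun j hj => ?_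
    rw [← Finset.range_eq_Ico]
    have h1 : ∀ i ∈ range j, ρ ^ (((i:ℤ) - (j:ℤ)).natAbs) * (y i * y j) =
        y j * (ρ ^ (j - i) * y i) := by
      intro i hi
      have hi' : i < j := Finset.mem_range.mp hi
      have : ((i:ℤ) - (j:ℤ)).natAbs = j - i := by omega
      rw [this]; ring
    rw [Finset.sum_congr rfl h1, ← Finset.mul_sum, ← ar1u_formula]
    ring
  rw [Finset.sum_congr rfl hlow, hupp, ← Finset.sum_add_distrib]
  refine Finset.sum_congr rfl fun k _ => ?_
  ring

/-- eigenvalue lower bound for the AR(1) Toeplitz covariance: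
for `0 < ρ < 1` and `t ≥ 1`, every eigenvalue of the `t × t` Toeplitz matrix
`[T_t(ρ)]_{ij} = ρ^{|i−j|}` is at least `(1−ρ)/(1+ρ)`; equivalently,
`xᵀ T_t(ρ) x ≥ ((1−ρ)/(1+ρ))·‖x‖²` for every `x ∈ ℝ^t`. -/
theorem ar1_toeplitz_eigenvalue_lower_bound
    (ρ : ℝ) (hρ0 : 0 < ρ) (hρ1 : ρ < 1)
    (t : ℕ) (ht : 1 ≤ t)
    (T : Matrix (Fin t) (Fin t) ℝ)
    (hT : ∀ i j : Fin t, T i j = ρ ^ (((i : ℤ) - (j : ℤ)).natAbs)) :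
    (∀ r : ℝ, Module.End.HasEigenvalue (Matrix.toLin' T) r → (1 - ρ) / (1 + ρ) ≤ r) ∧
    (∀ x : Fin t → ℝ,
      (1 - ρ) / (1 + ρ) * (∑ i, x i ^ 2) ≤ x ⬝ᵥ T.mulVec x) := by
  have key : ∀ x : Fin t → ℝ,
      (1 - ρ) / (1 + ρ) * (∑ i, x i ^ 2) ≤ x ⬝ᵥ T.mulVec x := by
    intro x
    set y : ℕ → ℝ := fun k => if h : k < t then x ⟨k, h⟩ else 0 with hy
    have hyx : ∀ i : Fin t, y (i : ℕ) = x i := by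
      intro i
      simp [hy, i.isLt]
    have h1 : x ⬝ᵥ T.mulVec x =
        ∑ i ∈ Finset.range t, ∑ j ∈ Finset.range t,
          ρ ^ (((i:ℤ) - (j:ℤ)).natAbs) * (y i * y j) := by
      have : ∀ i : Fin t, x i * (T.mulVec x) i =
          ∑ j : Fin t, ρ ^ (((i:ℤ) - (j:ℤ)).natAbs) * (y i * y j) := by
        intro i
        rw [mulVec, dotProduct, Finset.mul_sum]
        refine Finset.sum_congr rfl fun j _ => ?_
        rw [hT i j, hyx, hyx]
        ring
      rw [dotProduct, Finset.sum_congr rfl fun i _ => this i]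
      rw [← Fin.sum_univ_eq_sum_range (fun i => ∑ j ∈ Finset.range t,
          ρ ^ (((i:ℤ) - (j:ℤ)).natAbs) * (y i * y j)) t]
      refine Finset.sum_congr rfl fun i _ => ?_
      exact Fin.sum_univ_eq_sum_range
        (fun j => ρ ^ ((((i:ℕ):ℤ) - (j:ℤ)).natAbs) * (y i * y j)) t
    have h2 : ∑ i, x i ^ 2 = ∑ k ∈ Finset.range t, y k ^ 2 := by
      rw [← Fin.sum_univ_eq_sum_range (fun k => y k ^ 2) t]
      exact Finset.sum_congr rfl fun i _ => by rw [hyx]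
    rw [h1, h2, ar1_double_sum]
    have h3 := ar1_key_ineq ρ hρ0 hρ1 y t
    nlinarith [mul_nonneg hρ0.le (sq_nonneg (ar1u ρ y t))]
  refine ⟨?_, key⟩
  intro r hr
  obtain ⟨v, hv⟩ := hr.exists_hasEigenvector
  have hveq : T.mulVec v = r • v := by
    have := hv.apply_eq_smul
    rwa [Matrix.toLin'_apply] at this
  have hdot : v ⬝ᵥ T.mulVec v = r * ∑ i, v i ^ 2 := by
    rw [hveq]
    simp [dotProduct, Finset.mul_sum, sq]
    exact Finset.sum_congr rfl fun i _ => by ring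
  have hpos : 0 < ∑ i, v i ^ 2 := by
    obtain ⟨i, hi⟩ := Function.ne_iff.mp hv.right
    refine Finset.sum_pos' (fun j _ => sq_nonneg _) ⟨i, Finset.mem_univ i, ?_⟩
    have : v i ≠ 0 := hi
    positivity
  have := key v
  rw [hdot] at this
  exact le_of_mul_le_mul_right this hpos
end
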